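/- arXiv:2202.04919 — 2 statements merged into one kernel-verified Lean document; each statement's English description precedes it below -/
import Mathlib

section
/- Let m ∈ ℕ, δ > 0, a ≥ 0, C_2 ≥ 0 and K ≥ 0. There is a constant C, depending only on m, K, C_2, a and δ, with the following property. Let M : (−∞, 0] → ℝ^{m×m} and ζ : (−∞, 0] → ℝ^m be continuous with ∫_{−∞}^{0} ‖M(s)‖ ds ≤ K and ‖ζ(s)‖ ≤ C_2 ⟨s⟩^a e^{δs} for all s ≤ 0, and let ξ : (−∞, 0] → ℝ^m be continuously differentiable with ξ′(s) = M(s) ξ(s) + ζ(s) for all s ≤ 0 and ξ(s) → 0 as s → −∞. Then ‖ξ(s)‖ ≤ C ⟨s⟩^a e^{δs} for all s ≤ 0. -/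
/-- The Japanese bracket `⟨x⟩ = (1 + x²)^{1/2}`. -/
noncomputable def jbr (x : ℝ) : ℝ := Real.sqrt (1 + x ^ 2)

open Set MeasureTheory Filter intervalIntegral Topology

lemma jbr_nonneg (x : ℝ) : 0 ≤ jbr x := Real.sqrt_nonneg _

lemma jbr_one_le (x : ℝ) : 1 ≤ jbr x := by
  have h := Real.sqrt_le_sqrt (show (1:ℝ) ≤ 1 + x ^ 2 by nlinarith)
  simpa [jbr] using h

lemma jbr_le_add {r s : ℝ} (hrs : r ≤ s) (hs : s ≤ 0) : jbr r ≤ jbr s + (s - r) := by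
  have h1 : -s ≤ jbr s := by
    have h := Real.sqrt_le_sqrt (show s ^ 2 ≤ 1 + s ^ 2 by nlinarith)
    rw [Real.sqrt_sq_eq_abs] at h
    have := neg_abs_le s
    simp only [jbr]; linarith
  have h2 : (0:ℝ) ≤ jbr s + (s - r) := by linarith [jbr_nonneg s]
  have hsq : jbr s ^ 2 = 1 + s ^ 2 := Real.sq_sqrt (by positivity)
  have h3 : 1 + r ^ 2 ≤ (jbr s + (s - r)) ^ 2 := by nlinarith [sub_nonneg.2 hrs]
  calc jbr r = Real.sqrt (1 + r ^ 2) := rfl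
    _ ≤ Real.sqrt ((jbr s + (s - r)) ^ 2) := Real.sqrt_le_sqrt h3
    _ = jbr s + (s - r) := by rw [Real.sqrt_sq h2]

lemma continuous_jbr : Continuous jbr := by
  unfold jbr; fun_prop

lemma poly_exp_bdd (δ a : ℝ) (hδ : 0 < δ) (ha : 0 ≤ a) :
    ∃ D, 0 ≤ D ∧ ∀ t ≥ (0:ℝ), (1+t) ^ a * Real.exp (-(δ/2)*t) ≤ D := by
  have hcont : Continuous (fun t : ℝ => (1+t) ^ a * Real.exp (-(δ/2)*t)) :=
    ((continuous_const.add continuous_id).rpow_const (fun x => Or.inr ha)).mul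
      (Real.continuous_exp.comp (continuous_const.mul continuous_id))
  have h1 : Tendsto (fun t : ℝ => (1+t) ^ a * Real.exp (-(δ/2)*t)) atTop (𝓝 0) := by
    have h2 : Tendsto (fun x : ℝ => x ^ a * Real.exp (-(δ/2) * x)) atTop (𝓝 0) :=
      tendsto_rpow_mul_exp_neg_mul_atTop_nhds_zero a (δ/2) (by positivity)
    have h3 : Tendsto (fun t : ℝ => (1+t)) atTop atTop :=
      tendsto_atTop_add_const_left _ 1 tendsto_id
    have h4 := (h2.comp h3).mul_const (Real.exp (δ/2))
    rw [zero_mul] at h4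
    refine h4.congr fun t => ?_
    simp only [Function.comp]
    rw [mul_assoc, ← Real.exp_add]
    ring_nf
  have h5 : ∀ᶠ t in atTop, (1+t) ^ a * Real.exp (-(δ/2)*t) ≤ 1 :=
    h1.eventually_le_const one_pos
  obtain ⟨T, hT⟩ := eventually_atTop.1 h5
  obtain ⟨C, hC⟩ := isCompact_Icc.exists_bound_of_continuousOn
    (hcont.continuousOn (s := Icc 0 (max T 0)))
  refine ⟨max C 1, le_trans zero_le_one (le_max_right _ _), fun t ht => ?_⟩
  rcases le_or_gt t (max T 0) with h | h
  · exact le_trans (le_trans (le_abs_self _) (hC t ⟨ht, h⟩)) (le_max_left _ _)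
  · exact le_trans (hT t ((le_max_left _ _).trans h.le)) (le_max_right _ _)

lemma exp_Iic (δ : ℝ) (hδ : 0 < δ) (s : ℝ) :
    IntegrableOn (fun r => Real.exp ((δ/2)*(r - s))) (Set.Iic s) ∧
    (∫ r in Set.Iic s, Real.exp ((δ/2)*(r - s))) ≤ 2/δ := by
  have hF : ∀ r : ℝ, HasDerivAt (fun r : ℝ => (2/δ) * Real.exp ((δ/2)*(r-s)))
      (Real.exp ((δ/2)*(r-s))) r := by
    intro r
    have h1 : HasDerivAt (fun r : ℝ => (δ/2)*(r-s)) (δ/2) r := by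
      simpa using ((hasDerivAt_id r).sub_const s).const_mul (δ/2)
    have h2 := h1.exp.const_mul (2/δ)
    have hδ0 := hδ.ne'
    have h22 : (2/δ) * (δ/2) = 1 := by field_simp
    have heq : 2/δ * (Real.exp ((δ/2)*(r-s)) * (δ/2)) = Real.exp ((δ/2)*(r-s)) := by
      linear_combination (Real.exp ((δ/2)*(r-s))) * h22
    rw [heq] at h2
    exact h2
  have hcont : Continuous (fun r : ℝ => Real.exp ((δ/2)*(r - s))) := by fun_prop
  have hftc : ∀ T : ℝ, (∫ r in T..s, Real.exp ((δ/2)*(r-s)))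
      = (2/δ) * Real.exp ((δ/2)*(s-s)) - (2/δ) * Real.exp ((δ/2)*(T-s)) := by
    intro T
    exact integral_eq_sub_of_hasDerivAt (fun x _ => hF x) (hcont.intervalIntegrable T s)
  have hbdd : ∀ T : ℝ, (∫ r in T..s, Real.exp ((δ/2)*(r-s))) ≤ 2/δ := by
    intro T
    rw [hftc T]
    simp only [sub_self, mul_zero, Real.exp_zero, mul_one]
    have := Real.exp_pos ((δ/2)*(T-s))
    have h2δ : (0:ℝ) < 2/δ := by positivity
    nlinarith
  have hint : IntegrableOn (fun r => Real.exp ((δ/2)*(r - s))) (Set.Iic s) := by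
    refine integrableOn_Iic_of_intervalIntegral_norm_bounded (2/δ) s
      (fun T => hcont.integrableOn_Ioc) tendsto_id
      (Filter.Eventually.of_forall fun T => ?_)
    have : ∀ x, ‖Real.exp ((δ/2)*(x - s))‖ = Real.exp ((δ/2)*(x - s)) := fun x =>
      Real.norm_eq_abs _ ▸ abs_of_pos (Real.exp_pos _)
    simp only [this]
    exact hbdd T
  refine ⟨hint, ?_⟩
  exact le_of_tendsto (intervalIntegral_tendsto_integral_Iic s hint tendsto_id)
    (Filter.Eventually.of_forall hbdd)

lemma weight_bound (δ a : ℝ) (hδ : 0 < δ) (ha : 0 ≤ a) :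
    ∃ c : ℝ, 0 ≤ c ∧ ∀ s ≤ (0:ℝ),
      MeasureTheory.IntegrableOn (fun r => jbr r ^ a * Real.exp (δ * r)) (Set.Iic s) ∧
      (∫ r in Set.Iic s, jbr r ^ a * Real.exp (δ * r)) ≤ c * (jbr s ^ a * Real.exp (δ * s)) := by
  obtain ⟨D, hD0, hD⟩ := poly_exp_bdd δ a hδ ha
  refine ⟨D * (2/δ), by positivity, fun s hs => ?_⟩
  -- pointwise bound
  have hpt : ∀ r ∈ Iic s, jbr r ^ a * Real.exp (δ * r)
      ≤ D * (jbr s ^ a * Real.exp (δ * s)) * Real.exp ((δ/2)*(r - s)) := by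
    intro r hr
    rw [mem_Iic] at hr
    have h1 : jbr r ≤ jbr s * (1 + (s - r)) := by
      have h := jbr_le_add hr hs
      nlinarith [jbr_one_le s, sub_nonneg.2 hr]
    have h2 : jbr r ^ a ≤ (jbr s * (1 + (s - r))) ^ a :=
      Real.rpow_le_rpow (jbr_nonneg r) h1 ha
    have h3 : (jbr s * (1 + (s - r))) ^ a = jbr s ^ a * (1 + (s - r)) ^ a :=
      Real.mul_rpow (jbr_nonneg s) (by nlinarith [sub_nonneg.2 hr])
    have h4 : (1 + (s - r)) ^ a ≤ D * Real.exp ((δ/2)*(s - r)) := by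
      have h5 := hD (s - r) (sub_nonneg.2 hr)
      have h6 := Real.exp_pos (-(δ/2)*(s-r))
      have h7 : Real.exp (-(δ/2)*(s-r)) * Real.exp ((δ/2)*(s-r)) = 1 := by
        rw [← Real.exp_add]; ring_nf; exact Real.exp_zero
      nlinarith [Real.rpow_nonneg (show (0:ℝ) ≤ 1 + (s-r) by nlinarith [sub_nonneg.2 hr]) a,
        Real.exp_pos ((δ/2)*(s-r))]
    have hexp : Real.exp ((δ/2)*(s-r)) * Real.exp (δ*r)
        = Real.exp (δ*s) * Real.exp ((δ/2)*(r-s)) := by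
      rw [← Real.exp_add, ← Real.exp_add]; ring_nf
    have hexppos := (Real.exp_pos (δ * r)).le
    have hb := Real.rpow_nonneg (jbr_nonneg s) a
    have hstep : jbr r ^ a * Real.exp (δ * r)
        ≤ jbr s ^ a * (1 + (s - r)) ^ a * Real.exp (δ * r) := by
      rw [← h3]; exact mul_le_mul_of_nonneg_right h2 hexppos
    calc jbr r ^ a * Real.exp (δ * r)
        ≤ (jbr s ^ a * (D * Real.exp ((δ/2)*(s - r)))) * Real.exp (δ * r) :=
          le_trans hstep (mul_le_mul_of_nonneg_right
            (mul_le_mul_of_nonneg_left h4 hb) hexppos)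
      _ = D * (jbr s ^ a * Real.exp (δ * s)) * Real.exp ((δ/2)*(r - s)) := by
          linear_combination (jbr s ^ a * D) * hexp
  obtain ⟨hexpint, hexpval⟩ := exp_Iic δ hδ s
  have hdom : IntegrableOn
      (fun r => D * (jbr s ^ a * Real.exp (δ * s)) * Real.exp ((δ/2)*(r - s))) (Iic s) :=
    hexpint.const_mul _
  have hcontg : Continuous (fun r : ℝ => jbr r ^ a * Real.exp (δ * r)) :=
    (continuous_jbr.rpow_const (fun x => Or.inr ha)).mul
      (Real.continuous_exp.comp (continuous_const.mul continuous_id))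
  have hgint : IntegrableOn (fun r => jbr r ^ a * Real.exp (δ * r)) (Iic s) := by
    refine hdom.mono' hcontg.aestronglyMeasurable.restrict ?_
    refine (ae_restrict_iff' measurableSet_Iic).2 (ae_of_all _ fun r hr => ?_)
    rw [Real.norm_eq_abs, abs_of_nonneg
      (mul_nonneg (Real.rpow_nonneg (jbr_nonneg r) a) (Real.exp_pos _).le)]
    exact hpt r hr
  refine ⟨hgint, ?_⟩
  calc (∫ r in Set.Iic s, jbr r ^ a * Real.exp (δ * r))
      ≤ ∫ r in Set.Iic s, D * (jbr s ^ a * Real.exp (δ * s)) * Real.exp ((δ/2)*(r - s)) :=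
        setIntegral_mono_on hgint hdom measurableSet_Iic hpt
    _ = D * (jbr s ^ a * Real.exp (δ * s)) * ∫ r in Set.Iic s, Real.exp ((δ/2)*(r - s)) :=
        integral_const_mul _ _
    _ ≤ D * (jbr s ^ a * Real.exp (δ * s)) * (2/δ) := by
        exact mul_le_mul_of_nonneg_left hexpval
          (mul_nonneg hD0 (mul_nonneg (Real.rpow_nonneg (jbr_nonneg s) a)
            (Real.exp_pos _).le))
    _ = D * (2/δ) * (jbr s ^ a * Real.exp (δ * s)) := by ring

lemma exists_bound_Iic {E : Type*} [NormedAddCommGroup E] {f : ℝ → E}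
    (hc : ContinuousOn f (Set.Iic 0)) (h0 : Filter.Tendsto f Filter.atBot (nhds 0)) :
    ∃ B, 0 ≤ B ∧ ∀ t ≤ (0:ℝ), ‖f t‖ ≤ B := by
  have h1 : ∀ᶠ t in atBot, ‖f t‖ ≤ 1 := by
    have := h0.norm
    rw [norm_zero] at this
    exact this.eventually_le_const one_pos
  obtain ⟨T, hT⟩ := eventually_atBot.1 h1
  set T' := min T 0 with hT'
  obtain ⟨C, hC⟩ := isCompact_Icc.exists_bound_of_continuousOn
    (hc.mono (Icc_subset_Iic_self (b := (0:ℝ)) (a := T')))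
  refine ⟨max C 1, le_trans zero_le_one (le_max_right _ _), fun t ht => ?_⟩
  rcases le_or_gt t T' with h | h
  · exact le_trans (hT t (le_trans h (min_le_left _ _))) (le_max_right _ _)
  · exact le_trans (hC t ⟨h.le, ht⟩) (le_max_left _ _)

lemma primitive_facts {f : ℝ → ℝ} (hf : ∀ r, 0 ≤ f r)
    (hfc : ContinuousOn f (Set.Iic 0)) (hfi : IntegrableOn f (Set.Iic 0)) :
    (∀ t, 0 ≤ ∫ r in Set.Iic t, f r) ∧
    (∀ t₁ t₂, t₁ ≤ t₂ → t₂ ≤ (0:ℝ) → (∫ r in Set.Iic t₁, f r) ≤ ∫ r in Set.Iic t₂, f r) ∧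
    ContinuousOn (fun t => ∫ r in Set.Iic t, f r) (Set.Iic 0) ∧
    (∀ t < (0:ℝ), HasDerivAt (fun u => ∫ r in Set.Iic u, f r) (f t) t) := by
  set F : ℝ → ℝ := fun t => ∫ r in Set.Iic t, f r with hF
  have hid : ∀ t ≤ (0:ℝ), F t = F 0 + ∫ r in (0:ℝ)..t, f r := by
    intro t ht
    have h := integral_Iic_sub_Iic (μ := volume) (f := f)
      (hfi.mono_set (Iic_subset_Iic.2 ht)) hfi
    rw [intervalIntegral.integral_symm]
    linarith [h]
  have hnn : ∀ t, 0 ≤ F t := fun t =>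
    setIntegral_nonneg measurableSet_Iic fun r _ => hf r
  have hmono : ∀ t₁ t₂, t₁ ≤ t₂ → t₂ ≤ (0:ℝ) → F t₁ ≤ F t₂ := by
    intro t₁ t₂ h12 h20
    refine setIntegral_mono_set (hfi.mono_set (Iic_subset_Iic.2 h20))
      (ae_of_all _ hf) (HasSubset.Subset.eventuallyLE (Iic_subset_Iic.2 h12))
  have hcont : ContinuousOn F (Set.Iic 0) := by
    intro t ht
    rw [mem_Iic] at ht
    have hsub : Icc (t - 1) 0 ⊆ Iic (0:ℝ) := Icc_subset_Iic_self
    have hii : IntervalIntegrable f volume 0 (t - 1) := by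
      refine (hfi.mono_set ?_).intervalIntegrable
      rw [uIcc_of_ge (by linarith)]
      exact Icc_subset_Iic_self
    have hpc : ContinuousOn (fun b => F 0 + ∫ r in (0:ℝ)..b, f r) (Icc (t-1) 0) := by
      have := continuousOn_primitive_interval' (a := 0) (b₁ := t - 1) (b₂ := 0)
        hii.symm (by rw [uIcc_of_le (by linarith)]; exact ⟨by linarith, le_rfl⟩)
      rw [uIcc_of_le (by linarith)] at this
      exact continuousOn_const.add this
    have hcw : ContinuousWithinAt F (Icc (t-1) 0) t := by
      refine (hpc.continuousWithinAt ⟨by linarith, ht⟩).congr ?_ ?_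
      · exact fun y hy => hid y hy.2
      · exact hid t ht
    refine hcw.mono_of_mem_nhdsWithin ?_
    have h1 : Set.Iic (0:ℝ) ∈ 𝓝[Set.Iic 0] t := self_mem_nhdsWithin
    have h2 : Set.Ici (t-1) ∈ 𝓝[Set.Iic 0] t :=
      mem_nhdsWithin_of_mem_nhds (Ici_mem_nhds (by linarith))
    have := Filter.inter_mem h2 h1
    rwa [Set.Ici_inter_Iic] at this
  refine ⟨hnn, hmono, hcont, ?_⟩
  intro t ht
  have hii : IntervalIntegrable f volume 0 t := by
    refine (hfi.mono_set ?_).intervalIntegrable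
    rw [uIcc_of_ge ht.le]
    exact Icc_subset_Iic_self
  have hmeas : StronglyMeasurableAtFilter f (𝓝 t) :=
    (hfc.mono Iio_subset_Iic_self).stronglyMeasurableAtFilter isOpen_Iio t ht
  have hca : ContinuousAt f t := (hfc.continuousAt (Iic_mem_nhds ht))
  have hd := (integral_hasDerivAt_right hii hmeas hca).const_add (F 0)
  refine hd.congr_of_eventuallyEq ?_
  exact Filter.eventuallyEq_of_mem (Iic_mem_nhds ht) hid

/-- Duhamel decay estimate.  Given `m ∈ ℕ`, `δ > 0`, `a ≥ 0`,
`C₂ ≥ 0`, `K ≥ 0`, there is `C` (depending only on these data) such that: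
for continuous `M : (−∞,0] → ℝ^{m×m}` with `∫ ‖M‖ ≤ K`, continuous `ζ` with
`‖ζ(s)‖ ≤ C₂ ⟨s⟩^a e^{δ s}`, and continuously differentiable `ξ` with
`ξ′ = M ξ + ζ` and `ξ(s) → 0` as `s → −∞`, one has
`‖ξ(s)‖ ≤ C ⟨s⟩^a e^{δ s}` for all `s ≤ 0`. -/
theorem duhamel_decay
    (m : ℕ) (hm : 1 ≤ m) (δ a C₂ K : ℝ)
    (hδ : 0 < δ) (ha : 0 ≤ a) (hC₂ : 0 ≤ C₂) (hK : 0 ≤ K) :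
    ∃ C : ℝ,
      ∀ (M : ℝ → EuclideanSpace ℝ (Fin m) →L[ℝ] EuclideanSpace ℝ (Fin m))
        (ζ ξ : ℝ → EuclideanSpace ℝ (Fin m)),
        ContinuousOn M (Set.Iic 0) →
        ContinuousOn ζ (Set.Iic 0) →
        MeasureTheory.IntegrableOn (fun s => ‖M s‖) (Set.Iic 0) →
        (∫ s in Set.Iic (0 : ℝ), ‖M s‖) ≤ K →
        (∀ s ≤ (0 : ℝ), ‖ζ s‖ ≤ C₂ * jbr s ^ a * Real.exp (δ * s)) →
        (∀ s ≤ (0 : ℝ), HasDerivWithinAt ξ (M s (ξ s) + ζ s) (Set.Iic 0) s) →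
        Filter.Tendsto ξ Filter.atBot (nhds 0) →
        ∀ s ≤ (0 : ℝ), ‖ξ s‖ ≤ C * jbr s ^ a * Real.exp (δ * s) := by
  obtain ⟨c, hc0, hcw⟩ := weight_bound δ a hδ ha
  refine ⟨Real.exp K * (C₂ * c), ?_⟩
  intro M ζ ξ hMc hζc hMi hMK hζb hξd hξ0
  have hξcont : ContinuousOn ξ (Iic 0) := fun t ht => (hξd t ht).continuousWithinAt
  obtain ⟨B, hB0, hBb⟩ := exists_bound_Iic hξcont hξ0
  have hMnc : ContinuousOn (fun r => ‖M r‖) (Iic 0) := hMc.norm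
  have hζnc : ContinuousOn (fun r => ‖ζ r‖) (Iic 0) := hζc.norm
  -- ζ (in norm) is integrable on Iic 0
  have hζi : IntegrableOn (fun r => ‖ζ r‖) (Iic 0) := by
    refine (((hcw 0 le_rfl).1).const_mul C₂).mono'
      (hζnc.aestronglyMeasurable measurableSet_Iic) ?_
    refine (ae_restrict_iff' measurableSet_Iic).2 (ae_of_all _ fun r hr => ?_)
    rw [norm_norm]
    calc ‖ζ r‖ ≤ C₂ * jbr r ^ a * Real.exp (δ * r) := hζb r hr
      _ = C₂ * (jbr r ^ a * Real.exp (δ * r)) := by ring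
  -- the primitives N and G
  set N : ℝ → ℝ := fun t => ∫ r in Iic t, ‖M r‖ with hNdef
  set G : ℝ → ℝ := fun t => ∫ r in Iic t, ‖ζ r‖ with hGdef
  obtain ⟨hN0', hNmono', hNcont', hNderiv'⟩ :=
    primitive_facts (fun r => norm_nonneg (M r)) hMnc hMi
  obtain ⟨hG0', hGmono', hGcont', -⟩ :=
    primitive_facts (fun r => norm_nonneg (ζ r)) hζnc hζi
  have hN0 : ∀ t, 0 ≤ N t := hN0'
  have hNmono : ∀ t₁ t₂, t₁ ≤ t₂ → t₂ ≤ (0:ℝ) → N t₁ ≤ N t₂ := hNmono'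
  have hNcont : ContinuousOn N (Set.Iic 0) := hNcont'
  have hNderiv : ∀ t < (0:ℝ), HasDerivAt N (‖M t‖) t := hNderiv'
  have hG0 : ∀ t, 0 ≤ G t := hG0'
  have hGmono : ∀ t₁ t₂, t₁ ≤ t₂ → t₂ ≤ (0:ℝ) → G t₁ ≤ G t₂ := hGmono'
  have hGcont : ContinuousOn G (Set.Iic 0) := hGcont'
  clear hN0' hNmono' hNcont' hNderiv' hG0' hGmono' hGcont'
  have hNK : ∀ t, t ≤ 0 → N t ≤ K := fun t ht => le_trans (hNmono t 0 ht le_rfl) hMK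
  -- integrability of ‖M‖⬝‖ξ‖
  have hMx_int : IntegrableOn (fun r => ‖M r‖ * ‖ξ r‖) (Iic 0) := by
    refine (hMi.mul_const B).mono'
      ((hMnc.mul hξcont.norm).aestronglyMeasurable measurableSet_Iic) ?_
    refine (ae_restrict_iff' measurableSet_Iic).2 (ae_of_all _ fun r hr => ?_)
    rw [Real.norm_eq_abs, abs_of_nonneg (mul_nonneg (norm_nonneg _) (norm_nonneg _))]
    exact mul_le_mul_of_nonneg_left (hBb r hr) (norm_nonneg _)
  -- integrability of the vector field
  have hFc : ContinuousOn (fun r => M r (ξ r) + ζ r) (Iic 0) :=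
    (hMc.clm_apply hξcont).add hζc
  have hFi : IntegrableOn (fun r => M r (ξ r) + ζ r) (Iic 0) := by
    refine ((hMi.mul_const B).add hζi).mono'
      (hFc.aestronglyMeasurable measurableSet_Iic) ?_
    refine (ae_restrict_iff' measurableSet_Iic).2 (ae_of_all _ fun r hr => ?_)
    refine le_trans (norm_add_le _ _) (add_le_add ?_ le_rfl)
    exact le_trans ((M r).le_opNorm _)
      (mul_le_mul_of_nonneg_left (hBb r hr) (norm_nonneg _))
  -- integral representation
  have hrep : ∀ s ≤ (0:ℝ), ξ s = ∫ r in Iic s, (M r (ξ r) + ζ r) := by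
    intro s hs
    have hfi' : IntegrableOn (fun r => M r (ξ r) + ζ r) (Iic s) :=
      hFi.mono_set (Iic_subset_Iic.2 hs)
    have hftc : ∀ T, T ≤ s → (∫ r in T..s, (M r (ξ r) + ζ r)) = ξ s - ξ T := by
      intro T hT
      refine integral_eq_sub_of_hasDeriv_right_of_le hT
        (hξcont.mono (Icc_subset_Iic_self.trans (Iic_subset_Iic.2 hs))) ?_ ?_
      · intro x hx
        have hx0 : x < 0 := lt_of_lt_of_le hx.2 hs
        exact ((hξd x hx0.le).hasDerivAt (Iic_mem_nhds hx0)).hasDerivWithinAt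
      · rw [intervalIntegrable_iff_integrableOn_Ioc_of_le hT]
        exact hfi'.mono_set Ioc_subset_Iic_self
    have h1 : Tendsto (fun T : ℝ => ∫ r in T..s, (M r (ξ r) + ζ r)) atBot
        (𝓝 (∫ r in Iic s, (M r (ξ r) + ζ r))) :=
      intervalIntegral_tendsto_integral_Iic s hfi' tendsto_id
    have h1' : Tendsto (fun T : ℝ => ξ s - ξ T) atBot
        (𝓝 (∫ r in Iic s, (M r (ξ r) + ζ r))) :=
      h1.congr' ((eventually_le_atBot s).mono fun T hT => hftc T hT) |>.congr (fun T => rfl)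
    have h2 : Tendsto (fun T : ℝ => ξ s - ξ T) atBot (𝓝 (ξ s - 0)) :=
      tendsto_const_nhds.sub hξ0
    rw [sub_zero] at h2
    exact (tendsto_nhds_unique h1' h2).symm
  -- the key integral inequality
  have hkey : ∀ s ≤ (0:ℝ), ‖ξ s‖ ≤ (∫ r in Iic s, ‖M r‖ * ‖ξ r‖) + G s := by
    intro s hs
    rw [hrep s hs]
    refine le_trans (norm_integral_le_integral_norm _) ?_
    have hsub := Iic_subset_Iic.2 hs
    have h1 : (∫ r in Iic s, ‖M r (ξ r) + ζ r‖)
        ≤ ∫ r in Iic s, (‖M r‖ * ‖ξ r‖ + ‖ζ r‖) := by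
      refine setIntegral_mono_on ((hFi.mono_set hsub).norm)
        ((hMx_int.mono_set hsub).add (hζi.mono_set hsub)) measurableSet_Iic
        fun r hr => ?_
      exact le_trans (norm_add_le _ _) (add_le_add ((M r).le_opNorm _) le_rfl)
    rw [integral_add (hMx_int.mono_set hsub) (hζi.mono_set hsub)] at h1
    exact h1
  -- integrability of ‖M‖ N^n and the iterated-integral bound
  have hMN : ∀ (j : ℕ) (s : ℝ), s ≤ 0 → IntegrableOn (fun r => ‖M r‖ * N r ^ j) (Iic s) := by
    intro j s hs
    have hsub := Iic_subset_Iic.2 hs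
    refine ((hMi.mono_set hsub).mul_const (K ^ j)).mono'
      (((hMnc.mono hsub).mul ((hNcont.mono hsub).pow j)).aestronglyMeasurable
        measurableSet_Iic) ?_
    refine (ae_restrict_iff' measurableSet_Iic).2 (ae_of_all _ fun r hr => ?_)
    have hr0 : r ≤ 0 := le_trans hr hs
    rw [Real.norm_eq_abs, abs_of_nonneg (mul_nonneg (norm_nonneg _) (pow_nonneg (hN0 r) j))]
    exact mul_le_mul_of_nonneg_left
      (pow_le_pow_left₀ (hN0 r) (hNK r hr0) j) (norm_nonneg _)
  have hNpow : ∀ (j : ℕ) (s : ℝ), s ≤ 0 →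
      (∫ r in Iic s, ‖M r‖ * N r ^ j) ≤ N s ^ (j+1) / (j+1) := by
    intro j s hs
    have hint := hMN j s hs
    have hftc : ∀ T, T ≤ s → (∫ r in T..s, ‖M r‖ * N r ^ j)
        = N s ^ (j+1) / (j+1) - N T ^ (j+1) / (j+1) := by
      intro T hT
      have hsub2 : Icc T s ⊆ Iic (0:ℝ) := Icc_subset_Iic_self.trans (Iic_subset_Iic.2 hs)
      refine integral_eq_sub_of_hasDeriv_right_of_le hT
        (((hNcont.mono hsub2).pow (j+1)).div_const _) ?_ ?_
      · intro x hx
        have hx0 : x < 0 := lt_of_lt_of_le hx.2 hs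
        have hd := ((hNderiv x hx0).pow (j+1)).div_const ((j:ℝ)+1)
        have hj : ((j:ℝ)+1) ≠ 0 := by positivity
        have heq : (↑(j+1) * N x ^ (j + 1 - 1) * ‖M x‖) / ((j:ℝ)+1) = ‖M x‖ * N x ^ j := by
          simp only [Nat.add_sub_cancel]
          push_cast
          rw [mul_assoc, mul_div_cancel_left₀ _ hj, mul_comm]
        rw [heq] at hd
        exact hd.hasDerivWithinAt
      · rw [intervalIntegrable_iff_integrableOn_Ioc_of_le hT]
        exact hint.mono_set Ioc_subset_Iic_self
    refine le_of_tendsto (intervalIntegral_tendsto_integral_Iic s hint tendsto_id)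
      (((eventually_le_atBot s).mono fun T hT => ?_))
    simp only [id_eq]
    rw [hftc T hT]
    have h1 : 0 ≤ N T ^ (j+1) / ((j:ℝ)+1) := by
      apply div_nonneg (pow_nonneg (hN0 T) _) (by positivity)
    push_cast
    push_cast at h1
    linarith
  -- Grönwall induction
  have hgron : ∀ (n : ℕ) (s : ℝ), s ≤ 0 → ‖ξ s‖ ≤
      G s * (∑ j ∈ Finset.range n, N s ^ j / (Nat.factorial j)) +
        B * (N s ^ n / (Nat.factorial n)) := by
    intro n
    induction n with
    | zero => intro s hs; simpa using hBb s hs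
    | succ n ih =>
      intro s hs
      have hsub := Iic_subset_Iic.2 hs
      -- pointwise bound on the integrand
      have hptw : ∀ r ∈ Iic s, ‖M r‖ * ‖ξ r‖ ≤
          (∑ j ∈ Finset.range n, (G s / (Nat.factorial j)) * (‖M r‖ * N r ^ j)) +
            (B / (Nat.factorial n)) * (‖M r‖ * N r ^ n) := by
        intro r hr
        rw [mem_Iic] at hr
        have hr0 : r ≤ 0 := le_trans hr hs
        have h1 : ‖ξ r‖ ≤ G s * (∑ j ∈ Finset.range n, N r ^ j / (Nat.factorial j)) +
            B * (N r ^ n / (Nat.factorial n)) := by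
          refine le_trans (ih r hr0) (add_le_add ?_ le_rfl)
          refine mul_le_mul_of_nonneg_right (hGmono r s hr hs) ?_
          exact Finset.sum_nonneg fun j _ =>
            div_nonneg (pow_nonneg (hN0 r) j) (Nat.cast_nonneg _)
        have h2 := mul_le_mul_of_nonneg_left h1 (norm_nonneg (M r))
        refine le_trans h2 (le_of_eq ?_)
        rw [mul_add]
        congr 1
        · rw [Finset.mul_sum, Finset.mul_sum]
          exact Finset.sum_congr rfl fun j _ => by ring
        · ring
      -- integrability of the RHS
      have hRHSi : IntegrableOn (fun r =>
          (∑ j ∈ Finset.range n, (G s / (Nat.factorial j)) * (‖M r‖ * N r ^ j)) +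
            (B / (Nat.factorial n)) * (‖M r‖ * N r ^ n)) (Iic s) := by
        refine Integrable.add ?_ ((hMN n s hs).const_mul _)
        exact integrable_finset_sum _ fun j _ => (hMN j s hs).const_mul _
      -- chain of bounds
      have h3 : (∫ r in Iic s, ‖M r‖ * ‖ξ r‖) ≤
          (∑ j ∈ Finset.range n, (G s / (Nat.factorial j)) * (N s ^ (j+1) / (j+1))) +
            (B / (Nat.factorial n)) * (N s ^ (n+1) / (n+1)) := by
        refine le_trans (setIntegral_mono_on (hMx_int.mono_set hsub) hRHSi
          measurableSet_Iic hptw) ?_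
        rw [integral_add (integrable_finset_sum _ fun j _ => (hMN j s hs).const_mul _)
          ((hMN n s hs).const_mul _)]
        rw [integral_finset_sum _ (fun j _ => (hMN j s hs).const_mul _)]
        refine add_le_add (Finset.sum_le_sum fun j _ => ?_) ?_
        · rw [MeasureTheory.integral_const_mul]
          refine mul_le_mul_of_nonneg_left (hNpow j s hs) ?_
          exact div_nonneg (hG0 s) (Nat.cast_nonneg _)
        · rw [MeasureTheory.integral_const_mul]
          refine mul_le_mul_of_nonneg_left (hNpow n s hs) ?_
          exact div_nonneg hB0 (Nat.cast_nonneg _)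
      -- consolidate
      have h4 := le_trans (hkey s hs) (add_le_add h3 le_rfl)
      refine le_trans h4 (le_of_eq ?_)
      rw [Finset.sum_range_succ']
      have hfact : ∀ j : ℕ, ((Nat.factorial (j+1) : ℝ)) = (j+1) * (Nat.factorial j) := by
        intro j; rw [Nat.factorial_succ]; push_cast; ring
      have hterm : ∀ j : ℕ, (G s / (Nat.factorial j)) * (N s ^ (j+1) / (j+1))
          = G s * (N s ^ (j+1) / (Nat.factorial (j+1))) := by
        intro j
        rw [hfact j]
        have h5 : ((Nat.factorial j : ℝ)) ≠ 0 := Nat.cast_ne_zero.2 (Nat.factorial_ne_zero j)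
        have h6 : ((j:ℝ)+1) ≠ 0 := by positivity
        field_simp
        try ring
        try exact Or.inl trivial
      have hBterm : (B / (Nat.factorial n)) * (N s ^ (n+1) / (n+1))
          = B * (N s ^ (n+1) / (Nat.factorial (n+1))) := by
        rw [hfact n]
        have h5 : ((Nat.factorial n : ℝ)) ≠ 0 := Nat.cast_ne_zero.2 (Nat.factorial_ne_zero n)
        have h6 : ((n:ℝ)+1) ≠ 0 := by positivity
        field_simp
        try ring
        try exact Or.inl trivial
      rw [hBterm]
      rw [Finset.sum_congr rfl (fun j _ => hterm j)]
      simp only [pow_zero, Nat.factorial_zero, Nat.cast_one]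
      rw [mul_add, Finset.mul_sum]
      push_cast
      ring
  -- take the limit n → ∞
  have hfinal : ∀ s ≤ (0:ℝ), ‖ξ s‖ ≤ Real.exp K * G s := by
    intro s hs
    have hbound : ∀ n : ℕ, ‖ξ s‖ ≤ G s * Real.exp K + B * (K ^ n / (Nat.factorial n)) := by
      intro n
      refine le_trans (hgron n s hs) (add_le_add ?_ ?_)
      · refine mul_le_mul_of_nonneg_left ?_ (hG0 s)
        refine le_trans (Real.sum_le_exp_of_nonneg (hN0 s) n) ?_
        exact Real.exp_le_exp.2 (hNK s hs)
      · refine mul_le_mul_of_nonneg_left ?_ hB0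
        gcongr
        all_goals first | exact hNK s hs | exact hN0 s
    have htend : Tendsto (fun n : ℕ => G s * Real.exp K + B * (K ^ n / (Nat.factorial n)))
        atTop (𝓝 (G s * Real.exp K + B * 0)) :=
      tendsto_const_nhds.add ((FloorSemiring.tendsto_pow_div_factorial_atTop K).const_mul B)
    rw [mul_zero, add_zero] at htend
    have := ge_of_tendsto' htend hbound
    linarith [this]
  -- conclusion
  intro s hs
  have h1 := hfinal s hs
  have h2 : G s ≤ C₂ * (c * (jbr s ^ a * Real.exp (δ * s))) := by
    have h3 : G s ≤ ∫ r in Iic s, C₂ * (jbr r ^ a * Real.exp (δ * r)) := by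
      refine setIntegral_mono_on (hζi.mono_set (Iic_subset_Iic.2 hs))
        (((hcw s hs).1).const_mul C₂) measurableSet_Iic fun r hr => ?_
      rw [mem_Iic] at hr
      calc ‖ζ r‖ ≤ C₂ * jbr r ^ a * Real.exp (δ * r) := hζb r (le_trans hr hs)
        _ = C₂ * (jbr r ^ a * Real.exp (δ * r)) := by ring
    rw [MeasureTheory.integral_const_mul] at h3
    exact le_trans h3 (mul_le_mul_of_nonneg_left (hcw s hs).2 hC₂)
  calc ‖ξ s‖ ≤ Real.exp K * G s := h1
    _ ≤ Real.exp K * (C₂ * (c * (jbr s ^ a * Real.exp (δ * s)))) :=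
        mul_le_mul_of_nonneg_left h2 (Real.exp_pos K).le
    _ = Real.exp K * (C₂ * c) * jbr s ^ a * Real.exp (δ * s) := by ring
end

section
/- Let n ≥ 1, let p_1 < ⋯ < p_n and r_1, …, r_n be real numbers, and let a ≥ 0, ε > 0, C ≥ 0. For reals p_1 < ⋯ < p_n and ρ ≤ 0, set m_{AB}(ρ) := min{1, exp(2(p_B − p_A)ρ)}. Then there exist constants C′ ≥ 0 and a′ ≥ 0, depending only on n, the p_A, the r_A, C, a and ε, such that the following holds for every ρ ≤ 0: if μ̄_1, …, μ̄_n are reals with |μ̄_A − p_A ρ − r_A| ≤ C ⟨ρ⟩^a e^{2ερ} for all A, and Y is a real n×n matrix with |Y_{CB} − δ_{CB}| ≤ C ⟨ρ⟩^a e^{2ερ} m_{CB}(ρ) for all C, B, then the quantities b_{AB} := e^{−2 p_{max(A,B)} ρ} ∑_{C=1}^{n} e^{2 μ̄_C} Y_{CA} Y_{CB} satisfy |b_{AB} − e^{2 r_A} δ_{AB}| ≤ C′ ⟨ρ⟩^{a′} e^{2ερ} for all A, B ∈ {1,…,n}. -/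
open Real Finset

theorem Real.abs_exp_sub_one_le_abs_mul_exp_abs (u : ℝ) : |exp u - 1| ≤ |u| * exp |u| := by
  have hinv : exp u * exp (-u) = 1 := by rw [← exp_add, add_neg_cancel, exp_zero]
  rcases le_total 0 u with hu | hu
  · rw [abs_of_nonneg hu, abs_of_nonneg (sub_nonneg.2 (one_le_exp hu))]
    nlinarith [add_one_le_exp (-u), exp_pos u]
  · rw [abs_of_nonpos hu, abs_of_nonpos (sub_nonpos.2 (exp_le_one_iff.2 hu))]
    nlinarith [add_one_le_exp u, one_le_exp (neg_nonneg.2 hu)]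

theorem jbr_le_one_add_abs (x : ℝ) : jbr x ≤ 1 + |x| :=
  sqrt_le_iff.2 ⟨by positivity, by nlinarith [sq_abs x, abs_nonneg x]⟩

theorem jbr_rpow_le_mul_exp_abs {a ε : ℝ} (ha : 0 ≤ a) (hε : 0 < ε) (x : ℝ) :
    jbr x ^ a ≤ (ε / (a + ε)) ^ (-a) * exp (ε * |x|) := by
  set l := ε / (a + ε)
  have hl0 : 0 < l := by positivity
  have hl1 : l ≤ 1 := div_le_one_of_le₀ (by linarith) (by positivity)
  have hal : a * l ≤ ε := by
    rw [← mul_div_assoc, div_le_iff₀ (by positivity)]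
    nlinarith
  have hjbr : jbr x ≤ l⁻¹ * exp (l * |x|) := by
    rw [le_inv_mul_iff₀ hl0]
    nlinarith [jbr_le_one_add_abs x, add_one_le_exp (l * |x|), abs_nonneg x]
  calc jbr x ^ a ≤ (l⁻¹ * exp (l * |x|)) ^ a := rpow_le_rpow (sqrt_nonneg _) hjbr ha
    _ = l ^ (-a) * exp (a * l * |x|) := by
      rw [mul_rpow (inv_nonneg.2 hl0.le) (exp_pos _).le, inv_rpow hl0.le, ← rpow_neg hl0.le,
        ← exp_mul]
      ring_nf
    _ ≤ l ^ (-a) * exp (ε * |x|) := by gcongr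

theorem jbr_rpow_mul_exp_le_of_nonpos {a ε ρ : ℝ} (ha : 0 ≤ a) (hε : 0 < ε) (hρ : ρ ≤ 0) :
    jbr ρ ^ a * exp (ε * ρ) ≤ (ε / (a + ε)) ^ (-a) :=
  calc jbr ρ ^ a * exp (ε * ρ) ≤ (ε / (a + ε)) ^ (-a) * exp (ε * -ρ) * exp (ε * ρ) := by
        rw [← abs_of_nonpos hρ]; gcongr; exact jbr_rpow_le_mul_exp_abs ha hε ρ
    _ = (ε / (a + ε)) ^ (-a) := by rw [mul_assoc, ← exp_add]; simp

section FrameWeight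

variable {ι : Type*} (p : ι → ℝ) (ρ : ℝ)

/-- The weight `m_{DB}(ρ)` of the paper. -/
noncomputable def frameWeight (D B : ι) : ℝ := min 1 (exp (2 * (p B - p D) * ρ))

theorem frameWeight_nonneg (D B : ι) : 0 ≤ frameWeight p ρ D B :=
  le_min zero_le_one (exp_pos _).le

theorem frameWeight_le_one (D B : ι) : frameWeight p ρ D B ≤ 1 := min_le_left _ _

theorem abs_kronecker_le_frameWeight [DecidableEq ι] (D B : ι) :
    |if D = B then (1 : ℝ) else 0| ≤ frameWeight p ρ D B := by
  split_ifs with h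
  · simp [h, frameWeight]
  · simpa using frameWeight_nonneg p ρ D B

theorem exp_mul_frameWeight_le_one (D B : ι) :
    exp (2 * (p D - p B) * ρ) * frameWeight p ρ D B ≤ 1 :=
  calc exp (2 * (p D - p B) * ρ) * frameWeight p ρ D B
      ≤ exp (2 * (p D - p B) * ρ) * exp (2 * (p B - p D) * ρ) := by
        gcongr; exact min_le_right _ _
    _ = 1 := by rw [← exp_add, ← exp_zero]; ring_nf

theorem exp_max_mul_frameWeight_mul_frameWeight_le_one [LinearOrder ι] (A B D : ι) :
    exp (2 * (p D - p (max A B)) * ρ) * (frameWeight p ρ D A * frameWeight p ρ D B) ≤ 1 := by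
  have hA := frameWeight_le_one p ρ D A
  have hB := frameWeight_le_one p ρ D B
  have hA0 := frameWeight_nonneg p ρ D A
  have hB0 := frameWeight_nonneg p ρ D B
  rcases max_choice A B with h | h <;> rw [h]
  · nlinarith [exp_mul_frameWeight_le_one p ρ D A, exp_pos (2 * (p D - p A) * ρ)]
  · nlinarith [exp_mul_frameWeight_le_one p ρ D B, exp_pos (2 * (p D - p B) * ρ)]

end FrameWeight

theorem abs_exp_two_mul_mul_mul_sub_le {d u v s t X m m' : ℝ} (hd : |d| ≤ X)
    (hu : |u - s| ≤ X * m) (hv : |v - t| ≤ X * m') (hs : |s| ≤ m) (ht : |t| ≤ m') :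
    |exp (2 * d) * u * v - s * t| ≤ X * (2 * exp (2 * X) * (1 + X) ^ 2 + 2 + X) * (m * m') := by
  have hX : 0 ≤ X := (abs_nonneg d).trans hd
  have hm : 0 ≤ m := (abs_nonneg s).trans hs
  have hm' : 0 ≤ m' := (abs_nonneg t).trans ht
  have hu' : |u| ≤ (1 + X) * m := by linarith [abs_sub_abs_le_abs_sub u s]
  have hv' : |v| ≤ (1 + X) * m' := by linarith [abs_sub_abs_le_abs_sub v t]
  have hexp : |exp (2 * d) - 1| ≤ 2 * X * exp (2 * X) := by
    have h2d : |2 * d| ≤ 2 * X := by rw [abs_mul, abs_two]; linarith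
    calc |exp (2 * d) - 1| ≤ |2 * d| * exp |2 * d| := abs_exp_sub_one_le_abs_mul_exp_abs _
      _ ≤ 2 * X * exp (2 * X) := by gcongr
  have huv : |u * v - s * t| ≤ X * (2 + X) * (m * m') :=
    calc |u * v - s * t| = |(u - s) * v + s * (v - t)| := by ring_nf
      _ ≤ |u - s| * |v| + |s| * |v - t| := by rw [← abs_mul, ← abs_mul]; exact abs_add_le _ _
      _ ≤ X * m * ((1 + X) * m') + m * (X * m') := by gcongr
      _ = X * (2 + X) * (m * m') := by ring
  calc |exp (2 * d) * u * v - s * t| = |(exp (2 * d) - 1) * (u * v) + (u * v - s * t)| := by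
        ring_nf
    _ ≤ |exp (2 * d) - 1| * (|u| * |v|) + |u * v - s * t| := by
        rw [← abs_mul, ← abs_mul]; exact abs_add_le _ _
    _ ≤ 2 * X * exp (2 * X) * ((1 + X) * m * ((1 + X) * m')) + X * (2 + X) * (m * m') := by
        gcongr
    _ = X * (2 * exp (2 * X) * (1 + X) ^ 2 + 2 + X) * (m * m') := by ring

theorem rescaled_metric_sub_diag_eq_sum {ι : Type*} [Fintype ι] [LinearOrder ι] (p r μ : ι → ℝ)
    (Y : ι → ι → ℝ) (ρ : ℝ) (A B : ι) :
    exp (-2 * p (max A B) * ρ) * (∑ D, exp (2 * μ D) * Y D A * Y D B) -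
        (if A = B then exp (2 * r A) else 0) =
      ∑ D, exp (2 * r D) * exp (2 * (p D - p (max A B)) * ρ) *
        (exp (2 * (μ D - p D * ρ - r D)) * Y D A * Y D B -
          (if D = A then 1 else 0) * (if D = B then 1 else 0)) := by
  have hdiag : ∑ D, exp (2 * r D) * exp (2 * (p D - p (max A B)) * ρ) *
      ((if D = A then 1 else 0) * (if D = B then 1 else 0)) = if A = B then exp (2 * r A) else 0 := by
    split_ifs with h
    · subst h; simp
    · simp [Ne.symm h]
  rw [← hdiag, mul_sum, ← sum_sub_distrib]
  refine sum_congr rfl fun D _ => ?_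
  have h : exp (2 * r D) * exp (2 * (p D - p (max A B)) * ρ) * exp (2 * (μ D - p D * ρ - r D))
      = exp (-2 * p (max A B) * ρ) * exp (2 * μ D) := by
    simp only [← exp_add]; ring_nf
  linear_combination Y D A * Y D B * h.symm

theorem abs_rescaled_metric_summand_le {ι : Type*} [LinearOrder ι] {p r μ : ι → ℝ}
    {Y : ι → ι → ℝ} {ρ X : ℝ} {A B D : ι} (hμ : |μ D - p D * ρ - r D| ≤ X)
    (hYA : |Y D A - (if D = A then 1 else 0)| ≤ X * frameWeight p ρ D A)
    (hYB : |Y D B - (if D = B then 1 else 0)| ≤ X * frameWeight p ρ D B) :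
    |exp (2 * r D) * exp (2 * (p D - p (max A B)) * ρ) *
        (exp (2 * (μ D - p D * ρ - r D)) * Y D A * Y D B -
          (if D = A then 1 else 0) * (if D = B then 1 else 0))| ≤
      exp (2 * r D) * (X * (2 * exp (2 * X) * (1 + X) ^ 2 + 2 + X)) := by
  have hX : 0 ≤ X := (abs_nonneg _).trans hμ
  rw [abs_mul, abs_mul, abs_of_pos (exp_pos _), abs_of_pos (exp_pos _), mul_assoc]
  gcongr exp (2 * r D) * ?_
  calc exp (2 * (p D - p (max A B)) * ρ) * |exp (2 * (μ D - p D * ρ - r D)) * Y D A * Y D B -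
        (if D = A then 1 else 0) * (if D = B then 1 else 0)|
      ≤ exp (2 * (p D - p (max A B)) * ρ) * (X * (2 * exp (2 * X) * (1 + X) ^ 2 + 2 + X) *
          (frameWeight p ρ D A * frameWeight p ρ D B)) := by
        gcongr
        exact abs_exp_two_mul_mul_mul_sub_le hμ hYA hYB
          (abs_kronecker_le_frameWeight p ρ D A) (abs_kronecker_le_frameWeight p ρ D B)
    _ = X * (2 * exp (2 * X) * (1 + X) ^ 2 + 2 + X) *
          (exp (2 * (p D - p (max A B)) * ρ) * (frameWeight p ρ D A * frameWeight p ρ D B)) := by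
        ring
    _ ≤ X * (2 * exp (2 * X) * (1 + X) ^ 2 + 2 + X) * 1 := by
        gcongr
        exact exp_max_mul_frameWeight_mul_frameWeight_le_one p ρ A B D
    _ = X * (2 * exp (2 * X) * (1 + X) ^ 2 + 2 + X) := mul_one _

theorem rescaled_metric_diagonal_limit_general
    (n : ℕ) (p r : Fin n → ℝ)
    (a ε C : ℝ) (ha : 0 ≤ a) (hε : 0 < ε) (hC : 0 ≤ C) :
    ∃ C' a' : ℝ, 0 ≤ C' ∧ 0 ≤ a' ∧
      ∀ ρ ≤ (0 : ℝ), ∀ (μ : Fin n → ℝ) (Y : Fin n → Fin n → ℝ),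
        (∀ A, |μ A - p A * ρ - r A| ≤ C * jbr ρ ^ a * Real.exp (2 * ε * ρ)) →
        (∀ D B, |Y D B - (if D = B then 1 else 0)| ≤
          C * jbr ρ ^ a * Real.exp (2 * ε * ρ) *
            min 1 (Real.exp (2 * (p B - p D) * ρ))) →
        ∀ A B,
          |Real.exp (-2 * p (max A B) * ρ) *
              (∑ D, Real.exp (2 * μ D) * Y D A * Y D B) -
            (if A = B then Real.exp (2 * r A) else 0)| ≤
          C' * jbr ρ ^ a' * Real.exp (2 * ε * ρ) := by
  set S := C * (2 * ε / (a + 2 * ε)) ^ (-a)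
  set M := 2 * exp (2 * S) * (1 + S) ^ 2 + 2 + S
  refine ⟨(∑ D, exp (2 * r D)) * M * C, a, by positivity, ha, ?_⟩
  intro ρ hρ μ Y hμ hY A B
  set X := C * jbr ρ ^ a * exp (2 * ε * ρ) with hX
  have hXS : X ≤ S := by
    rw [hX, mul_assoc]
    exact mul_le_mul_of_nonneg_left (jbr_rpow_mul_exp_le_of_nonpos ha (by positivity) hρ) hC
  have hXM : X * (2 * exp (2 * X) * (1 + X) ^ 2 + 2 + X) ≤ X * M := by
    have hX0 : 0 ≤ X := (abs_nonneg _).trans (hμ A)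
    change _ ≤ X * (2 * exp (2 * S) * (1 + S) ^ 2 + 2 + S)
    gcongr
  rw [rescaled_metric_sub_diag_eq_sum]
  refine (abs_sum_le_sum_abs _ _).trans ?_
  calc _ ≤ ∑ D, exp (2 * r D) * (X * M) := sum_le_sum fun D _ =>
        (abs_rescaled_metric_summand_le (hμ D) (hY D A) (hY D B)).trans
          (mul_le_mul_of_nonneg_left hXM (exp_pos _).le)
    _ = (∑ D, exp (2 * r D)) * M * C * jbr ρ ^ a * exp (2 * ε * ρ) := by rw [← sum_mul]; ring

/-- Asymptotic diagonal form of the rescaled metric components.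
With weights `m_{CB}(ρ) = min{1, e^{2(p_B − p_C)ρ}}`, if
`|μ̄_A − p_A ρ − r_A| ≤ C ⟨ρ⟩^a e^{2ερ}` and
`|Y_{CB} − δ_{CB}| ≤ C ⟨ρ⟩^a e^{2ερ} m_{CB}(ρ)`, then
`b_{AB} := e^{−2 p_{max(A,B)} ρ} ∑_C e^{2 μ̄_C} Y_{CA} Y_{CB}` satisfies
`|b_{AB} − e^{2 r_A} δ_{AB}| ≤ C′ ⟨ρ⟩^{a′} e^{2ερ}`. -/
theorem rescaled_metric_diagonal_limit
    (n : ℕ) (hn : 1 ≤ n) (p r : Fin n → ℝ) (hp : StrictMono p)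
    (a ε C : ℝ) (ha : 0 ≤ a) (hε : 0 < ε) (hC : 0 ≤ C) :
    ∃ C' a' : ℝ, 0 ≤ C' ∧ 0 ≤ a' ∧
      ∀ ρ ≤ (0 : ℝ), ∀ (μ : Fin n → ℝ) (Y : Fin n → Fin n → ℝ),
        (∀ A, |μ A - p A * ρ - r A| ≤ C * jbr ρ ^ a * Real.exp (2 * ε * ρ)) →
        (∀ D B, |Y D B - (if D = B then 1 else 0)| ≤
          C * jbr ρ ^ a * Real.exp (2 * ε * ρ) *
            min 1 (Real.exp (2 * (p B - p D) * ρ))) →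
        ∀ A B,
          |Real.exp (-2 * p (max A B) * ρ) *
              (∑ D, Real.exp (2 * μ D) * Y D A * Y D B) -
            (if A = B then Real.exp (2 * r A) else 0)| ≤
          C' * jbr ρ ^ a' * Real.exp (2 * ε * ρ) :=
  rescaled_metric_diagonal_limit_general n p r a ε C ha hε hC
end
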